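/- arXiv:2003.09153 — 5 statements merged into one kernel-verified Lean document; each statement's English description precedes it below -/
import Mathlib

section
/- Let m, n, k, r, t, α be natural numbers with n > 0, t > 0, 1 ≤ k ≤ n, α = gcd(m, n), r·n = t·m − α, and t > α·n. Then ⌈m·k/n⌉ − 1 = ⌊r·k/t⌋. -/
/-!
Both sides are the largest integer `z` with `z < mk/n`, resp. `z ≤ rk/t`, so it suffices that
`z·n < m·k ↔ z·t ≤ r·k` for every integer `z`. Multiplying by `t` and `n` and using
`r·k·n + α·k = t·m·k`, this says that the integer `t·(m·k - z·n)` is positive iff it is at least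
`α·k`; this holds because `0 < α·k ≤ α·n < t`.
-/

theorem Int.ceil_sub_one_eq_floor_of_forall_lt_iff_le {K : Type*} [Ring K] [LinearOrder K]
    [FloorRing K] {x y : K} (h : ∀ z : ℤ, (z : K) < x ↔ (z : K) ≤ y) :
    ⌈x⌉ - 1 = ⌊y⌋ :=
  eq_of_forall_le_iff fun z => by rw [Int.le_sub_one_iff, Int.lt_ceil, Int.le_floor, h]

theorem mul_lt_iff_mul_le_of_mul_add_eq {A B c n t : ℤ} (hn : 0 < n) (hc : 0 < c) (hct : c ≤ t)
    (h : B * n + c = t * A) (z : ℤ) : z * n < A ↔ z * t ≤ B := by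
  rw [← mul_le_mul_iff_left₀ hn]
  constructor
  · intro hz
    have : t * (z * n + 1) ≤ t * A := mul_le_mul_of_nonneg_left hz (hc.le.trans hct)
    linarith
  · intro hz
    by_contra! hA
    have : t * A ≤ t * (z * n) := mul_le_mul_of_nonneg_left hA (hc.le.trans hct)
    linarith

theorem moulin_lemma_general (m n k r t α : ℕ) (hn : 0 < n)
    (hk1 : 1 ≤ k) (hkn : k ≤ n) (hα : α = Nat.gcd m n)
    (hrt : r * n + α = t * m) (htα : t > α * n) :
    ⌈(m * k : ℚ) / n⌉ - 1 = ⌊(r * k : ℚ) / t⌋ := by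
  have hα_pos : 0 < α := hα ▸ Nat.gcd_pos_of_pos_right m hn
  have ht : 0 < t := Nat.zero_lt_of_lt htα
  have hαk_pos : 0 < α * k := Nat.mul_pos hα_pos hk1
  have hαk_le : α * k ≤ t := (Nat.mul_le_mul_left α hkn).trans htα.le
  have hkey : r * k * n + α * k = t * (m * k) := by rw [← mul_assoc, ← hrt]; ring
  apply Int.ceil_sub_one_eq_floor_of_forall_lt_iff_le
  intro z
  rw [lt_div_iff₀ (by exact_mod_cast hn), le_div_iff₀ (by exact_mod_cast ht)]
  exact_mod_cast mul_lt_iff_mul_le_of_mul_add_eq (A := m * k) (B := r * k) (c := α * k)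
    (n := n) (t := t) (by exact_mod_cast hn) (by exact_mod_cast hαk_pos)
    (by exact_mod_cast hαk_le) (by exact_mod_cast hkey) z

/-- Moulin's lemma: the proportional veto power ⌈mk/n⌉ − 1 equals ⌊rk/t⌋
when r·n = t·m − α (i.e. r·n + α = t·m), α = gcd(m,n) and t > α·n. -/
theorem moulin_lemma (m n k r t α : ℕ) (hn : 0 < n) (ht : 0 < t)
    (hk1 : 1 ≤ k) (hkn : k ≤ n) (hα : α = Nat.gcd m n)
    (hrt : r * n + α = t * m) (htα : t > α * n) :
    ⌈(m * k : ℚ) / n⌉ - 1 = ⌊(r * k : ℚ) / t⌋ :=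
  moulin_lemma_general m n k r t α hn hk1 hkn hα hrt htα
end

section
/- Fix n voters with linear preference orders over m candidates (m, n ≥ 1), a candidate c, coefficients r, t with r·n = t·m − gcd(m,n) and t > n·gcd(m,n). Construct the bipartite graph G with r copies of each voter on the left, t copies of each candidate other than c on the right, and an edge between a copy of voter i and a copy of candidate d whenever i prefers d to c. Then c is blocked (i.e., there exists a coalition T and a set B of candidates with every voter in T preferring every member of B to c and m − |B| ≤ ⌈m·|T|/n⌉ − 1) if and only if G contains a biclique K_{x,y} with x + y ≥ t·m. -/
/-!
Both sides amount to a voter set `T` and a candidate set `B ∌ c` such that every voter of `T`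
prefers all of `B` to `c`: a biclique can be enlarged to all copies of the voters and candidates
it meets, and `c ∉ B` for a blocking set because preferences are irreflexive and `T ≠ ∅`.
With `k = |T|`, `b = |B|` and `g = gcd m n`, blocking says `m n < m k + b n`, and the biclique
bound says `t m ≤ k r + b t`. Multiplying the latter by `n` and substituting `r n = t m - g`
turns it into `k g ≤ t (m k + b n - m n)`. As `m k + b n - m n` is a multiple of `g` and
`k ≤ n ≤ t`, the two conditions are equivalent.
-/

/-- Coalition `T` blocks candidate `c` under the proportional veto function:
there is a set `B` of candidates, each preferred to `c` by every voter in `T`,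
with `m − |B| ≤ ⌈m·|T|/n⌉ − 1`. -/
def Blocks (m n : ℕ) (pref : Fin n → Fin m → Fin m → Prop)
    (T : Finset (Fin n)) (c : Fin m) : Prop :=
  ∃ B : Finset (Fin m), (∀ i ∈ T, ∀ b ∈ B, pref i b c) ∧
    (m : ℤ) - B.card ≤ ⌈(m * T.card : ℚ) / n⌉ - 1

open Finset

theorem Finset.card_le_card_image_fst_mul {α β : Type*} [DecidableEq α] [Fintype β]
    (s : Finset (α × β)) : #s ≤ #(s.image Prod.fst) * Fintype.card β :=
  calc #s ≤ #(s.image Prod.fst ×ˢ (univ : Finset β)) :=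
        card_le_card fun p hp => mem_product.2 ⟨mem_image_of_mem _ hp, mem_univ _⟩
    _ = #(s.image Prod.fst) * Fintype.card β := by rw [card_product, card_univ]

theorem Int.le_ceil_div_sub_one_iff {n : ℕ} (hn : 0 < n) (z : ℤ) (q : ℚ) :
    z ≤ ⌈q / n⌉ - 1 ↔ z * n < q := by
  rw [Int.le_sub_one_iff, Int.lt_ceil, lt_div_iff₀ (by exact_mod_cast hn)]

theorem blocks_iff_mul_lt {m n : ℕ} (hn : 0 < n) (pref : Fin n → Fin m → Fin m → Prop)
    (T : Finset (Fin n)) (c : Fin m) :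
    Blocks m n pref T c ↔
      ∃ B : Finset (Fin m), (∀ i ∈ T, ∀ b ∈ B, pref i b c) ∧ m * n < m * #T + #B * n := by
  unfold Blocks
  refine exists_congr fun B => and_congr_right fun _ => ?_
  rw [Int.le_ceil_div_sub_one_iff hn]
  push_cast
  rw [sub_mul, sub_lt_iff_lt_add]
  norm_cast

theorem exists_biclique_iff {α κ : Type*} [DecidableEq α] [DecidableEq κ]
    (pref : α → κ → κ → Prop) (c : κ) (r t N : ℕ) :
    (∃ (X : Finset (α × Fin r)) (Y : Finset ({d : κ // d ≠ c} × Fin t)),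
        (∀ p ∈ X, ∀ q ∈ Y, pref p.1 q.1.1 c) ∧ N ≤ #X + #Y) ↔
      ∃ (T : Finset α) (B : Finset κ), c ∉ B ∧ (∀ i ∈ T, ∀ b ∈ B, pref i b c) ∧
        N ≤ #T * r + #B * t := by
  constructor
  · rintro ⟨X, Y, hXY, hN⟩
    refine ⟨X.image Prod.fst, (Y.image Prod.fst).map (Function.Embedding.subtype _), ?_, ?_, ?_⟩
    · simp
    · simp only [mem_image, mem_map, Function.Embedding.subtype_apply]
      rintro _ ⟨p, hp, rfl⟩ _ ⟨d, ⟨q, hq, rfl⟩, rfl⟩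
      exact hXY p hp q hq
    · have hX := X.card_le_card_image_fst_mul
      have hY := Y.card_le_card_image_fst_mul
      simp only [Fintype.card_fin] at hX hY
      rw [card_map]
      omega
  · rintro ⟨T, B, hcB, hTB, hN⟩
    have hB : ∀ b ∈ B, b ≠ c := fun b hb hbc => hcB (hbc ▸ hb)
    refine ⟨T ×ˢ univ, B.subtype (· ≠ c) ×ˢ univ, ?_, ?_⟩
    · intro p hp q hq
      exact hTB p.1 (mem_product.1 hp).1 q.1.1 (mem_subtype.1 (mem_product.1 hq).1)
    · rwa [card_product, card_product, card_univ, card_univ, Fintype.card_fin, Fintype.card_fin,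
        card_subtype, filter_true_of_mem hB]

theorem mul_lt_mul_add_iff_mul_le_mul_add {m n r t k b : ℕ} (hrt : r * n + m.gcd n = t * m)
    (hk : 0 < k) (hkn : k ≤ n) (hnt : n ≤ t) :
    m * n < m * k + b * n ↔ t * m ≤ k * r + b * t := by
  have hkg : k * (r * n + m.gcd n) = k * (t * m) := by rw [hrt]
  have hg : 0 < m.gcd n := Nat.gcd_pos_of_pos_right m (hk.trans_le hkn)
  constructor
  · intro h
    -- `m * k + b * n - m * n` is a positive multiple of `gcd m n`
    have hD : (m.gcd n : ℤ) ≤ m * k + b * n - m * n := by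
      have hgm : (m.gcd n : ℤ) ∣ m := Int.natCast_dvd_natCast.2 (Nat.gcd_dvd_left m n)
      have hgn : (m.gcd n : ℤ) ∣ n := Int.natCast_dvd_natCast.2 (Nat.gcd_dvd_right m n)
      exact Int.le_of_dvd (by omega)
        (((hgm.mul_right k).add (hgn.mul_left b)).sub (hgm.mul_right n))
    have : n * (t * m) ≤ n * (k * r + b * t) := by
      zify at hkg hkn hnt ⊢
      nlinarith [mul_le_mul_of_nonneg_left hD (by positivity : (0 : ℤ) ≤ t)]
    exact Nat.le_of_mul_le_mul_left this (hk.trans_le hkn)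
  · intro h
    have : t * (m * n) < t * (m * k + b * n) := by nlinarith
    exact Nat.lt_of_mul_lt_mul_left this

theorem blocked_iff_biclique_general (m n r t : ℕ) (hn : 0 < n)
    (pref : Fin n → Fin m → Fin m → Prop)
    (hlin : ∀ i, IsStrictTotalOrder (Fin m) (pref i))
    (c : Fin m)
    (hrt : r * n + Nat.gcd m n = t * m) (ht : t > Nat.gcd m n * n) :
    (∃ T : Finset (Fin n), Blocks m n pref T c) ↔
      ∃ (X : Finset (Fin n × Fin r)) (Y : Finset ({d : Fin m // d ≠ c} × Fin t)),
        (∀ p ∈ X, ∀ q ∈ Y, pref p.1 (q : {d : Fin m // d ≠ c} × Fin t).1.1 c) ∧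
        t * m ≤ X.card + Y.card := by
  have hnt : n ≤ t := by nlinarith [Nat.gcd_pos_of_pos_right m hn]
  have hcount {T : Finset (Fin n)} (hT : 0 < #T) (b : ℕ) :=
    mul_lt_mul_add_iff_mul_le_mul_add (b := b) hrt hT (card_finset_fin_le T) hnt
  rw [exists_biclique_iff]
  constructor
  · rintro ⟨T, hT⟩
    obtain ⟨B, hTB, hlt⟩ := (blocks_iff_mul_lt hn pref T c).1 hT
    have hT : 0 < #T := by
      by_contra h0
      rw [Nat.eq_zero_of_not_pos h0] at hlt
      nlinarith [card_finset_fin_le B]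
    obtain ⟨i, hi⟩ := card_pos.1 hT
    have hcB : c ∉ B := fun hc => (hlin i).irrefl c (hTB i hi c hc)
    exact ⟨T, B, hcB, hTB, (hcount hT _).1 hlt⟩
  · rintro ⟨T, B, hcB, hTB, hle⟩
    have hB : #B < m := (card_lt_univ_of_notMem hcB).trans_eq (Fintype.card_fin m)
    have hT : 0 < #T := by
      by_contra h0
      rw [Nat.eq_zero_of_not_pos h0] at hle
      nlinarith
    exact ⟨T, (blocks_iff_mul_lt hn pref T c).2 ⟨B, hTB, (hcount hT _).2 hle⟩⟩

/-- Candidate `c` is blocked iff the blocking graph of `c` — with `r` copies of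
each voter on the left, `t` copies of each candidate other than `c` on the right,
and edges joining copies of voter `i` to copies of candidate `d` whenever
`i` prefers `d` to `c` — contains a biclique with at least `t·m` vertices. -/
theorem blocked_iff_biclique (m n r t : ℕ) (hm : 0 < m) (hn : 0 < n)
    (pref : Fin n → Fin m → Fin m → Prop)
    (hlin : ∀ i, IsStrictTotalOrder (Fin m) (pref i))
    (c : Fin m)
    (hrt : r * n + Nat.gcd m n = t * m) (ht : t > Nat.gcd m n * n) :
    (∃ T : Finset (Fin n), Blocks m n pref T c) ↔
      ∃ (X : Finset (Fin n × Fin r)) (Y : Finset ({d : Fin m // d ≠ c} × Fin t)),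
        (∀ p ∈ X, ∀ q ∈ Y, pref p.1 (q : {d : Fin m // d ≠ c} × Fin t).1.1 c) ∧
        t * m ≤ X.card + Y.card :=
  blocked_iff_biclique_general m n r t hn pref hlin c hrt ht
end

section
/- The proportional veto core is nonempty: for any profile of n linear orders over m candidates (m, n ≥ 1), there exists a candidate c that is not blocked by any coalition under the proportional veto function v(T) = ⌈m·|T|/n⌉ − 1. -/
open Finset

theorem Finset.exists_forall_eq_or_rel {α : Type*} (r : α → α → Prop) [IsStrictTotalOrder α r]
    {s : Finset α} (hs : s.Nonempty) : ∃ w ∈ s, ∀ y ∈ s, y = w ∨ r y w := by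
  classical
  let := linearOrderOfSTO r
  exact ⟨s.max' hs, s.max'_mem hs, fun y hy => (s.le_max' y hy).eq_or_lt⟩

namespace VetoByConsumption

variable {ι α : Type*} [Fintype α]

/-- `v x` is the number of vetoes absorbed by `x` so far. -/
def available (k : ℕ) (v : α → ℕ) : Finset α := {x | v x < k}

lemma mem_available {k : ℕ} {v : α → ℕ} {x : α} : x ∈ available k v ↔ v x < k := by
  simp [available]

variable [DecidableEq α] (r : ι → α → α → Prop) [∀ i, IsStrictTotalOrder α (r i)] (k : ℕ)

noncomputable def step (i : ι) (v : α → ℕ) : α → ℕ :=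
  if h : 1 < (available k v).card then
    let w := (exists_forall_eq_or_rel (r i) (card_pos.mp (Nat.zero_lt_of_lt h))).choose
    Function.update v w (v w + 1)
  else v

variable {r k}

lemma step_of_card_le_one {i : ι} {v : α → ℕ} (h : (available k v).card ≤ 1) :
    step r k i v = v := by
  rw [step, dif_neg (by omega)]

lemma exists_step_eq_update {i : ι} {v : α → ℕ} (h : 1 < (available k v).card) :
    ∃ w ∈ available k v, (∀ y ∈ available k v, y = w ∨ r i y w) ∧
      step r k i v = Function.update v w (v w + 1) := by
  have hw := exists_forall_eq_or_rel (r i) (card_pos.mp (Nat.zero_lt_of_lt h))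
  rw [step, dif_pos h]
  exact ⟨_, hw.choose_spec.1, hw.choose_spec.2, rfl⟩

lemma le_step (i : ι) (v : α → ℕ) (x : α) : v x ≤ step r k i v x := by
  by_cases h : 1 < (available k v).card
  · obtain ⟨w, -, -, hstep⟩ := exists_step_eq_update (r := r) (i := i) h
    rw [hstep, Function.update_apply]
    split_ifs with hx <;> simp [hx]
  · rw [step_of_card_le_one (by omega)]

lemma step_le {i : ι} {v : α → ℕ} {x : α} (hx : v x ≤ k) : step r k i v x ≤ k := by
  by_cases h : 1 < (available k v).card
  · obtain ⟨w, hw, -, hstep⟩ := exists_step_eq_update (r := r) (i := i) h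
    rw [mem_available] at hw
    rw [hstep, Function.update_apply]
    split_ifs with hxw
    · subst hxw; omega
    · exact hx
  · rwa [step_of_card_le_one (by omega)]

lemma available_step_subset (i : ι) (v : α → ℕ) : available k (step r k i v) ⊆ available k v :=
  fun x hx => mem_available.2 ((le_step i v x).trans_lt (mem_available.1 hx))

lemma available_step_nonempty {i : ι} {v : α → ℕ} (hv : (available k v).Nonempty) :
    (available k (step r k i v)).Nonempty := by
  by_cases h : 1 < (available k v).card
  · obtain ⟨w, -, -, hstep⟩ := exists_step_eq_update (r := r) (i := i) h
    obtain ⟨y, hy, hyw⟩ := exists_mem_ne h w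
    refine ⟨y, mem_available.2 ?_⟩
    rw [hstep, Function.update_of_ne hyw]
    exact mem_available.1 hy
  · rwa [step_of_card_le_one (by omega)]

lemma sum_step {i : ι} {v : α → ℕ} (h : 1 < (available k v).card) :
    ∑ x, step r k i v x = ∑ x, v x + 1 := by
  obtain ⟨w, -, -, hstep⟩ := exists_step_eq_update (r := r) (i := i) h
  rw [hstep, sum_update_of_mem (mem_univ w), sum_eq_add_sum_sdiff_singleton_of_mem (mem_univ w) v]
  omega

lemma sum_step_le (i : ι) (v : α → ℕ) (B : Finset α) :
    ∑ b ∈ B, step r k i v b ≤ ∑ b ∈ B, v b + 1 := by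
  by_cases h : 1 < (available k v).card
  · obtain ⟨w, -, -, hstep⟩ := exists_step_eq_update (r := r) (i := i) h
    rw [hstep]
    by_cases hw : w ∈ B
    · rw [sum_update_of_mem hw, sum_eq_add_sum_sdiff_singleton_of_mem hw v]
      omega
    · rw [sum_update_of_notMem hw]
      omega
  · rw [step_of_card_le_one (by omega)]
    omega

/-- A voter never vetoes a candidate it prefers to a candidate that stays available. -/
lemma sum_step_eq_of_rel {i : ι} {v : α → ℕ} {B : Finset α} {c : α}
    (hc : c ∈ available k (step r k i v)) (hB : ∀ b ∈ B, r i b c) :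
    ∑ b ∈ B, step r k i v b = ∑ b ∈ B, v b := by
  by_cases h : 1 < (available k v).card
  · obtain ⟨w, -, hworst, hstep⟩ := exists_step_eq_update (r := r) (i := i) h
    have hwB : w ∉ B := by
      intro hw
      have hwc := hB w hw
      rcases hworst c (available_step_subset i v hc) with rfl | hcw
      · exact irrefl _ hwc
      · exact asymm hwc hcw
    rw [hstep, sum_update_of_notMem hwB]
  · rw [step_of_card_le_one (by omega)]

variable (r k) in
/-- The schedule is consumed from the right end of `l`. -/
noncomputable def run (l : List ι) : α → ℕ := l.foldr (step r k) 0

@[simp] lemma run_nil : run r k ([] : List ι) = 0 := rfl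

@[simp] lemma run_cons (i : ι) (l : List ι) : run r k (i :: l) = step r k i (run r k l) := rfl

lemma run_le (l : List ι) (x : α) : run r k l x ≤ k := by
  induction l with
  | nil => simp
  | cons i l ih => exact step_le ih

lemma available_run_nonempty [Nonempty α] (hk : 0 < k) (l : List ι) :
    (available k (run r k l)).Nonempty := by
  induction l with
  | nil => exact ⟨Classical.arbitrary α, mem_available.2 (by simpa using hk)⟩
  | cons i l ih => exact available_step_nonempty ih

lemma sum_run_of_one_lt_card {l : List ι} (h : 1 < (available k (run r k l)).card) :
    ∑ x, run r k l x = l.length := by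
  induction l with
  | nil => simp
  | cons i l ih =>
    have hl : 1 < (available k (run r k l)).card :=
      h.trans_le (card_le_card (available_step_subset i _))
    rw [run_cons, sum_step hl, ih hl, List.length_cons]

lemma card_available_run [Nonempty α] (hk : 0 < k) {l : List ι}
    (hl : Fintype.card α * k ≤ l.length) : (available k (run r k l)).card = 1 := by
  have hav := available_run_nonempty (r := r) hk l
  by_contra hne
  have h : 1 < (available k (run r k l)).card := by
    have := hav.card_pos
    omega
  obtain ⟨x, hx⟩ := hav
  have hlt : ∑ y, run r k l y < ∑ _y : α, k :=
    sum_lt_sum (fun y _ => run_le l y) ⟨x, mem_univ x, mem_available.1 hx⟩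
  rw [sum_run_of_one_lt_card h, sum_const, card_univ, smul_eq_mul] at hlt
  omega

lemma sum_run_le_countP [DecidableEq ι] {T : Finset ι} {B : Finset α} {c : α}
    (hB : ∀ i ∈ T, ∀ b ∈ B, r i b c) {l : List ι} (hc : c ∈ available k (run r k l)) :
    ∑ b ∈ B, run r k l b ≤ l.countP (· ∉ T) := by
  induction l with
  | nil => simp
  | cons i l ih =>
    rw [run_cons] at hc ⊢
    have hl := ih (available_step_subset i _ hc)
    by_cases hi : i ∈ T
    · rw [sum_step_eq_of_rel hc (hB i hi), List.countP_cons_of_neg (by simpa using hi)]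
      exact hl
    · rw [List.countP_cons_of_pos (by simpa using hi)]
      exact (sum_step_le i _ B).trans (by omega)

lemma mul_card_le_countP [DecidableEq ι] {T : Finset ι} {B : Finset α} {c : α}
    (hT : T.Nonempty) (hB : ∀ i ∈ T, ∀ b ∈ B, r i b c) {l : List ι}
    (hc : available k (run r k l) = {c}) :
    k * B.card ≤ l.countP (· ∉ T) := by
  obtain ⟨i, hi⟩ := hT
  have hfull : ∀ b ∈ B, run r k l b = k := by
    intro b hb
    have hbc : b ≠ c := by
      rintro rfl
      exact irrefl b (hB i hi b hb)
    have hb : b ∉ available k (run r k l) := by simpa [hc] using hbc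
    exact le_antisymm (run_le l b) (not_lt.1 (mt mem_available.2 hb))
  calc k * B.card = ∑ b ∈ B, run r k l b := by
        rw [sum_congr rfl hfull, sum_const, smul_eq_mul, mul_comm]
    _ ≤ l.countP (· ∉ T) := sum_run_le_countP hB (by simp [hc])

variable (ι) in
noncomputable def roundRobin [Fintype ι] (rounds : ℕ) : List ι :=
  (List.replicate rounds (univ : Finset ι).toList).flatten

lemma length_roundRobin [Fintype ι] (rounds : ℕ) :
    (roundRobin ι rounds).length = rounds * Fintype.card ι := by
  simp [roundRobin]

lemma countP_not_mem_roundRobin [Fintype ι] [DecidableEq ι] (rounds : ℕ) (T : Finset ι) :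
    (roundRobin ι rounds).countP (· ∉ T) = rounds * (Fintype.card ι - T.card) := by
  have hround : (univ : Finset ι).toList.countP (· ∉ T) = (univ \ T).card := by
    rw [← Multiset.coe_countP, coe_toList, Multiset.countP_eq_card_filter, sdiff_eq_filter]
    rfl
  rw [roundRobin, List.countP_flatten, List.map_replicate, List.sum_replicate, smul_eq_mul, hround,
    card_univ_sdiff]

end VetoByConsumption

open VetoByConsumption

lemma not_blocks_of_mul_card_le {m n : ℕ} {pref : Fin n → Fin m → Fin m → Prop}
    {T : Finset (Fin n)} {c : Fin m} (hn : 0 < n)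
    (h : ∀ B : Finset (Fin m), (∀ i ∈ T, ∀ b ∈ B, pref i b c) → n * B.card ≤ m * (n - T.card)) :
    ¬ Blocks m n pref T c := by
  rintro ⟨B, hB, hblock⟩
  have hT : T.card ≤ n := by simpa using card_le_univ T
  have hcount : (n * B.card : ℚ) ≤ m * (n - T.card) := by exact_mod_cast h B hB
  have hceil : (m - B.card : ℚ) < m * T.card / n := by
    have := Int.ceil_lt_add_one ((m * T.card : ℚ) / n)
    have : ((m : ℤ) - B.card : ℚ) ≤ ⌈(m * T.card : ℚ) / n⌉ - 1 := by exact_mod_cast hblock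
    push_cast at this
    linarith
  rw [lt_div_iff₀ (by exact_mod_cast hn)] at hceil
  linarith

/-- The proportional veto core is nonempty: some candidate is blocked by no coalition. -/
theorem veto_core_nonempty (m n : ℕ) (hm : 0 < m) (hn : 0 < n)
    (pref : Fin n → Fin m → Fin m → Prop)
    (hlin : ∀ i, IsStrictTotalOrder (Fin m) (pref i)) :
    ∃ c : Fin m, ∀ T : Finset (Fin n), ¬ Blocks m n pref T c := by
  have : Nonempty (Fin m) := ⟨⟨0, hm⟩⟩
  obtain ⟨c, hc⟩ := card_eq_one.mp <| card_available_run (r := pref) hn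
    (l := roundRobin (Fin n) m) (by simp [length_roundRobin])
  refine ⟨c, fun T => not_blocks_of_mul_card_le hn fun B hB => ?_⟩
  rcases T.eq_empty_or_nonempty with rfl | hT
  · simpa [mul_comm] using Nat.mul_le_mul_left n (card_le_univ B)
  · simpa only [countP_not_mem_roundRobin, Fintype.card_fin] using mul_card_le_countP hT hB hc
end

section
/- Voting by veto tokens elects a candidate in the proportional veto core: in the cloned election with r copies of each voter and t copies of each candidate (where r·n = t·m − gcd(m,n), t > n·gcd(m,n)), if the voter-clones sequentially veto their least-preferred remaining candidate-clone in some order until gcd(m,n) clones remain, then any candidate with a surviving clone is unblocked in the original profile. -/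
/-!
Every voter-clone of a coalition `T` vetoes a clone that is worst among the remaining ones. As
long as a clone of `c` survives, such a veto can never hit a clone of a candidate that all of
`T` prefer to `c`; so if `T` blocks `c` through `B`, the `r·|T|` vetoes of `T`'s clones hit
distinct clones of candidates outside `B`, other than the surviving clone of `c`, giving
`r·|T| < t·(m - |B|)`. On the other hand `⌈m|T|/n⌉·n - m|T|` is a multiple of `gcd(m,n)`
below `n`, and with `r·n + gcd(m,n) = t·m` and `|T| ≤ n < t` this yields
`t·(⌈m|T|/n⌉ - 1) ≤ r·|T|`, contradicting `m - |B| ≤ ⌈m|T|/n⌉ - 1`.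
-/

open Finset

section ErasureSequence

variable {α : Type*} [DecidableEq α] {N : ℕ} {S : Fin (N + 1) → Finset α} {x : Fin N → α}

theorem antitone_of_succ_eq_erase (hS : ∀ j, S j.succ = (S j.castSucc).erase (x j)) :
    Antitone S :=
  Fin.antitone_iff_succ_le.mpr fun j => (hS j).trans_le (erase_subset _ _)

theorem not_mem_of_succ_le (hS : ∀ j, S j.succ = (S j.castSucc).erase (x j))
    {j : Fin N} {i : Fin (N + 1)} (hji : j.succ ≤ i) : x j ∉ S i := fun hx =>
  by simpa [hS j] using antitone_of_succ_eq_erase hS hji hx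

theorem injective_of_succ_eq_erase (hS : ∀ j, S j.succ = (S j.castSucc).erase (x j))
    (hx : ∀ j, x j ∈ S j.castSucc) : Function.Injective x := by
  refine .of_lt_imp_ne fun j j' hlt h => ?_
  exact not_mem_of_succ_le hS (Fin.succ_le_castSucc_iff.mpr hlt) (h ▸ hx j')

theorem ne_of_mem_last (hS : ∀ j, S j.succ = (S j.castSucc).erase (x j))
    {y : α} (hy : y ∈ S (Fin.last N)) (j : Fin N) : x j ≠ y := fun h =>
  not_mem_of_succ_le hS (Fin.le_last _) (h ▸ hy)

end ErasureSequence

theorem ceil_div_mul_sub_le_of_dvd {a n g : ℤ} (hn : 0 < n) (hga : g ∣ a) (hgn : g ∣ n) :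
    ⌈(a : ℚ) / n⌉ * n - a ≤ n - g := by
  set d := ⌈(a : ℚ) / n⌉ * n - a
  have hnq : (0 : ℚ) < n := by exact_mod_cast hn
  have hd : d < n := by
    have h := Int.ceil_lt_add_one ((a : ℚ) / n)
    rw [← sub_lt_iff_lt_add, lt_div_iff₀ hnq] at h
    have : ((d : ℤ) : ℚ) < n := by push_cast [d]; linarith
    exact_mod_cast this
  have hg : g ≤ n - d := Int.le_of_dvd (by omega) (dvd_sub hgn (dvd_sub (hgn.mul_left _) hga))
  omega

theorem mul_ceil_div_sub_one_le {m n r t g k : ℕ} (hn : 0 < n) (hgm : g ∣ m) (hgn : g ∣ n)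
    (hrt : r * n + g = t * m) (hkt : k ≤ t) :
    (t : ℤ) * (⌈(m * k : ℚ) / n⌉ - 1) ≤ r * k := by
  have hceil := ceil_div_mul_sub_le_of_dvd (a := m * k) (n := n) (g := g) (by omega)
    (Int.natCast_dvd_natCast.mpr (hgm.mul_right k)) (Int.natCast_dvd_natCast.mpr hgn)
  push_cast at hceil
  set q := ⌈(m * k : ℚ) / n⌉
  have hrt' : (r : ℤ) * n + g = t * m := by exact_mod_cast hrt
  have hkt' : (k : ℤ) ≤ t := by exact_mod_cast hkt
  have : (t : ℤ) * (q - 1) * n ≤ r * k * n := by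
    nlinarith [mul_le_mul_of_nonneg_left hceil (by positivity : (0 : ℤ) ≤ t),
      mul_le_mul_of_nonneg_left hkt' (by positivity : (0 : ℤ) ≤ g)]
  exact le_of_mul_le_mul_right this (by exact_mod_cast hn)

theorem card_filter_mem_eq_mul {β ι : Type*} [Fintype β] [DecidableEq ι] {r : ℕ}
    {order : β → ι} (horder : ∀ i, (univ.filter (fun j => order j = i)).card = r)
    (T : Finset ι) : (univ.filter (fun j => order j ∈ T)).card = r * T.card := by
  have hmaps : Set.MapsTo order (univ.filter (fun j => order j ∈ T) : Finset β) T :=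
    fun j hj => (mem_filter.mp hj).2
  rw [card_eq_sum_card_fiberwise hmaps,
    sum_congr rfl fun i hi => ?_, sum_const, smul_eq_mul, mul_comm]
  rw [filter_filter, ← horder i]
  exact congrArg card (filter_congr fun j _ => ⟨And.right, fun h => ⟨h ▸ hi, h⟩⟩)

theorem Blocks.nonempty {m n : ℕ} {pref : Fin n → Fin m → Fin m → Prop} {T : Finset (Fin n)}
    {c : Fin m} (h : Blocks m n pref T c) : T.Nonempty := by
  obtain ⟨B, -, hB⟩ := h
  rw [nonempty_iff_ne_empty]
  rintro rfl
  have : B.card ≤ m := (card_le_univ B).trans_eq (Fintype.card_fin m)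
  simp only [card_empty, CharP.cast_eq_zero, mul_zero, zero_div, Int.ceil_zero] at hB
  omega

theorem mul_card_lt_of_worst_vetoes {α ι : Type*} [Fintype α] [DecidableEq α] [DecidableEq ι]
    {pref : ι → α → α → Prop} [∀ i, IsStrictOrder α (pref i)] {N r t : ℕ}
    {order : Fin N → ι} (horder : ∀ i, (univ.filter (fun j => order j = i)).card = r)
    {x : Fin N → α × Fin t} (hinj : Function.Injective x) {c : α} {cl : Fin t}
    (hne : ∀ j, x j ≠ (c, cl)) (hworst : ∀ j, c = (x j).1 ∨ pref (order j) c (x j).1)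
    {T : Finset ι} (hT : T.Nonempty) {B : Finset α} (hB : ∀ i ∈ T, ∀ b ∈ B, pref i b c) :
    r * T.card < t * (univ \ B).card := by
  have hcB : c ∉ B := fun hc => irrefl c (hB _ hT.choose_spec c hc)
  have hmaps : Set.MapsTo x (univ.filter (fun j => order j ∈ T))
      (((univ \ B) ×ˢ univ).erase (c, cl) : Finset (α × Fin t)) := by
    intro j hj
    have hi : order j ∈ T := (mem_filter.mp hj).2
    have hxB : (x j).1 ∉ B := fun hx => (hworst j).elim (fun h => hcB (h ▸ hx))
      fun h => asymm h (hB _ hi _ hx)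
    simpa [hne j] using hxB
  have hcount := card_le_card_of_injOn x hmaps hinj.injOn
  rw [card_filter_mem_eq_mul horder, card_erase_of_mem (by simpa using hcB), card_product,
    card_univ, Fintype.card_fin] at hcount
  have hpos : 0 < (univ \ B).card * t :=
    Nat.mul_pos (card_pos.mpr ⟨c, by simpa using hcB⟩) cl.pos
  rw [mul_comm t]
  omega

theorem veto_tokens_in_core_general (m n r t : ℕ) (hn : 0 < n)
    (pref : Fin n → Fin m → Fin m → Prop)
    (hlin : ∀ i, IsStrictTotalOrder (Fin m) (pref i))
    (hrt : r * n + Nat.gcd m n = t * m) (ht : t > Nat.gcd m n * n)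
    (order : Fin (r * n) → Fin n)
    (horder : ∀ i : Fin n, (Finset.univ.filter (fun j => order j = i)).card = r)
    (S : Fin (r * n + 1) → Finset (Fin m × Fin t))
    (hstep : ∀ j : Fin (r * n), ∃ x ∈ S j.castSucc,
      S j.succ = (S j.castSucc).erase x ∧
      ∀ y ∈ S j.castSucc, y.1 = x.1 ∨ pref (order j) y.1 x.1)
    (c : Fin m) (hc : ∃ cl : Fin t, (c, cl) ∈ S (Fin.last (r * n))) :
    ∀ T : Finset (Fin n), ¬ Blocks m n pref T c := by
  obtain ⟨cl, hcl⟩ := hc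
  choose x hx hS hworst using hstep
  have : ∀ i, IsStrictOrder (Fin m) (pref i) := fun i => (hlin i).toIsStrictOrder
  rintro T hblocks
  have hT := hblocks.nonempty
  obtain ⟨B, hB, hcard⟩ := hblocks
  have hvetoes : r * T.card < t * (univ \ B).card :=
    mul_card_lt_of_worst_vetoes horder (injective_of_succ_eq_erase hS hx)
      (ne_of_mem_last hS hcl)
      (fun j => hworst j _ (antitone_of_succ_eq_erase hS (Fin.le_last _) hcl)) hT hB
  have hkt : T.card ≤ t :=
    calc T.card ≤ n := (card_le_univ T).trans_eq (Fintype.card_fin n)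
      _ ≤ Nat.gcd m n * n := Nat.le_mul_of_pos_left n (Nat.gcd_pos_of_pos_right m hn)
      _ ≤ t := ht.le
  have hceil := mul_ceil_div_sub_one_le hn (Nat.gcd_dvd_left m n) (Nat.gcd_dvd_right m n) hrt hkt
  have hcompl : ((univ \ B).card : ℤ) = m - B.card := by
    rw [card_univ_sdiff, Fintype.card_fin,
      Nat.cast_sub ((card_le_univ B).trans_eq (Fintype.card_fin m))]
  have hcompl_le : (t : ℤ) * (univ \ B).card ≤ r * T.card := by
    rw [hcompl]
    exact (mul_le_mul_of_nonneg_left hcard (Nat.cast_nonneg t)).trans hceil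
  omega

/-- Voting by veto tokens selects from the proportional veto core.
The cloned election has `r` copies of each voter and `t` copies of each candidate,
where `r·n + gcd(m,n) = t·m` and `t > gcd(m,n)·n`.  The `r·n` voter-clones, in the
order `order`, successively veto (erase) a remaining candidate-clone that is
worst for them among the remaining clones, leaving `gcd(m,n)` clones.  Any
candidate `c` with a surviving clone is unblocked in the original profile. -/
theorem veto_tokens_in_core (m n r t : ℕ) (hm : 0 < m) (hn : 0 < n)
    (pref : Fin n → Fin m → Fin m → Prop)
    (hlin : ∀ i, IsStrictTotalOrder (Fin m) (pref i))
    (hrt : r * n + Nat.gcd m n = t * m) (ht : t > Nat.gcd m n * n)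
    (order : Fin (r * n) → Fin n)
    (horder : ∀ i : Fin n, (Finset.univ.filter (fun j => order j = i)).card = r)
    (S : Fin (r * n + 1) → Finset (Fin m × Fin t))
    (hS0 : S 0 = Finset.univ)
    (hstep : ∀ j : Fin (r * n), ∃ x ∈ S j.castSucc,
      S j.succ = (S j.castSucc).erase x ∧
      ∀ y ∈ S j.castSucc, y.1 = x.1 ∨ pref (order j) y.1 x.1)
    (c : Fin m) (hc : ∃ cl : Fin t, (c, cl) ∈ S (Fin.last (r * n))) :
    ∀ T : Finset (Fin n), ¬ Blocks m n pref T c :=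
  veto_tokens_in_core_general m n r t hn pref hlin hrt ht order horder S hstep c hc
end

section
/- Veto by consumption elects a candidate in the proportional veto core: if candidate c is the last candidate to be fully eaten in the veto-by-consumption process, then c is not blocked by any coalition. -/
/-!
While `c` is uneaten, every voter of a blocking coalition `T` eats only candidates they rank
below `c`, i.e. outside the blocking set `B`. Since each candidate has capacity one and the
process lasts `m / n` time units, the coalition eats `m·|T|/n` units in total, all from the
`m - |B| < m·|T|/n` candidates outside `B`, which is impossible.
-/

open Finset

theorem Fin.sum_castSucc_sub_succ {G : Type*} [AddCommGroup G] :
    ∀ {K : ℕ} (f : Fin (K + 1) → G),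
      ∑ k : Fin K, (f k.castSucc - f k.succ) = f 0 - f (Fin.last K)
  | 0, f => by simp
  | K + 1, f => by
    have ih := Fin.sum_castSucc_sub_succ (f ∘ Fin.castSucc)
    simp only [Function.comp_apply] at ih
    rw [Fin.sum_univ_castSucc]
    simp only [Fin.succ_castSucc, ih, Fin.castSucc_zero, Fin.succ_last]
    abel

theorem ne_of_forall_eq_or_rel {α : Type*} {r : α → α → Prop} [IsStrictOrder α r]
    {s : Finset α} {e b c : α} (he : ∀ d ∈ s, d = e ∨ r d e) (hc : c ∈ s) (hb : r b c) :
    e ≠ b := by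
  rintro rfl
  rcases he c hc with rfl | hce
  · exact irrefl _ hb
  · exact irrefl _ (_root_.trans hb hce)

def consumed {ι α : Type*} [DecidableEq α] {K : ℕ} (dur : Fin K → ℚ) (eat : Fin K → ι → α)
    (T : Finset ι) (d : α) : ℚ :=
  ∑ k, dur k * #{i ∈ T | eat k i = d}

section Consumption

variable {ι α : Type*} [DecidableEq α] {K : ℕ} {dur : Fin K → ℚ} {eat : Fin K → ι → α}

theorem consumed_mono (hdur : ∀ k, 0 ≤ dur k) {T T' : Finset ι} (h : T ⊆ T') (d : α) :
    consumed dur eat T d ≤ consumed dur eat T' d :=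
  sum_le_sum fun k _ => mul_le_mul_of_nonneg_left
    (by exact_mod_cast card_le_card (filter_subset_filter _ h)) (hdur k)

theorem sum_consumed_eq {T : Finset ι} {W : Finset α} (hW : ∀ k, ∀ i ∈ T, eat k i ∈ W) :
    ∑ d ∈ W, consumed dur eat T d = (∑ k, dur k) * #T := by
  simp only [consumed]
  rw [sum_comm, sum_mul]
  refine sum_congr rfl fun k _ => ?_
  rw [← mul_sum, card_eq_sum_card_fiberwise (hW k), Nat.cast_sum]

variable [Fintype ι] {cap : Fin (K + 1) → α → ℚ}

theorem consumed_univ_eq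
    (hcap : ∀ k d, cap k.succ d = cap k.castSucc d - dur k * #{i | eat k i = d}) (d : α) :
    consumed dur eat univ d = cap 0 d - cap (Fin.last K) d := by
  rw [← Fin.sum_castSucc_sub_succ fun k => cap k d]
  simp [consumed, hcap]

theorem cap_eq_zero_of_notMem [Fintype α] {alive : Fin (K + 1) → Finset α}
    (halive0 : alive 0 = univ) (heat : ∀ k i, eat k i ∈ alive k.castSucc)
    (hcap : ∀ k d, cap k.succ d = cap k.castSucc d - dur k * #{i | eat k i = d})
    (halive : ∀ k : Fin K, alive k.succ = (alive k.castSucc).filter (fun d => cap k.succ d ≠ 0))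
    (k : Fin (K + 1)) (d : α) (hd : d ∉ alive k) : cap k d = 0 := by
  induction k using Fin.induction with
  | zero => simp [halive0] at hd
  | succ k ih =>
    rw [halive k, mem_filter, not_and_not_right] at hd
    by_cases hdk : d ∈ alive k.castSucc
    · exact hd hdk
    · have hnone : #{i | eat k i = d} = 0 := by
        rw [card_eq_zero, filter_eq_empty_iff]
        rintro i - rfl
        exact hdk (heat k i)
      rw [hcap, ih hdk, hnone]
      simp

end Consumption

theorem div_le_of_mul_eq_of_mul_le {m n t w : ℕ} {S : ℚ} (hS : S * n = m) (hw : S * t ≤ w) :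
    (m * t : ℚ) / n ≤ w := by
  rcases n.eq_zero_or_pos with rfl | hn
  · simp
  · rwa [← hS, mul_right_comm, mul_div_cancel_right₀ _ (by positivity)]

/-- The continuous eating process is given by its `K` rounds, during each of which the set
`alive k` of candidates with positive capacity, and hence what each voter eats, stays fixed. -/
theorem veto_by_consumption_in_core_general (m n K : ℕ)
    (pref : Fin n → Fin m → Fin m → Prop)
    (hlin : ∀ i, IsStrictTotalOrder (Fin m) (pref i))
    (alive : Fin (K + 1) → Finset (Fin m))
    (cap : Fin (K + 1) → Fin m → ℚ)
    (dur : Fin K → ℚ)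
    (eat : Fin K → Fin n → Fin m)
    (halive0 : alive 0 = Finset.univ)
    (hcap0 : ∀ d, cap 0 d = 1)
    (hdur : ∀ k, 0 < dur k)
    (heat : ∀ k i, eat k i ∈ alive k.castSucc ∧
      ∀ d ∈ alive k.castSucc, d = eat k i ∨ pref i d (eat k i))
    (hcap : ∀ k d, cap k.succ d =
      cap k.castSucc d - dur k * ((Finset.univ.filter (fun i => eat k i = d)).card : ℚ))
    (halive : ∀ k : Fin K, alive k.succ = (alive k.castSucc).filter (fun d => cap k.succ d ≠ 0))
    (hend : alive (Fin.last K) = ∅)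
    (c : Fin m) (hc : ∀ k : Fin K, c ∈ alive k.castSucc) :
    ∀ T : Finset (Fin n), ¬ Blocks m n pref T c := by
  rintro T ⟨B, hB, hBcard⟩
  have hTeat : ∀ k, ∀ i ∈ T, eat k i ∈ Bᶜ := fun k i hi => by
    have := hlin i
    rw [mem_compl]
    exact fun hb => ne_of_forall_eq_or_rel (heat k i).2 (hc k) (hB i hi _ hb) rfl
  have hlast : ∀ d, cap (Fin.last K) d = 0 := fun d =>
    cap_eq_zero_of_notMem halive0 (fun k i => (heat k i).1) hcap halive _ d (by simp [hend])
  have heaten : ∀ d, consumed dur eat univ d = 1 := fun d => by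
    simp [consumed_univ_eq hcap, hcap0, hlast]
  have htotal : (∑ k, dur k) * n = m := calc
    (∑ k, dur k) * n = ∑ d, consumed dur eat univ d := by
      rw [sum_consumed_eq fun k i _ => mem_univ (eat k i), card_fin]
    _ = m := by simp [heaten]
  have hcoalition : (∑ k, dur k) * #T ≤ #Bᶜ := calc
    (∑ k, dur k) * #T = ∑ d ∈ Bᶜ, consumed dur eat T d := (sum_consumed_eq hTeat).symm
    _ ≤ ∑ d ∈ Bᶜ, consumed dur eat univ d :=
      sum_le_sum fun d _ => consumed_mono (fun k => (hdur k).le) (subset_univ T) d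
    _ = #Bᶜ := by simp [heaten]
  have hceil : ⌈(m * #T : ℚ) / n⌉ ≤ #Bᶜ :=
    Int.ceil_le.mpr (by exact_mod_cast div_le_of_mul_eq_of_mul_le htotal hcoalition)
  have hcompl : #Bᶜ + #B = m := by simp [card_compl_add_card B]
  omega

/-- Veto by consumption selects from the proportional veto core.
The process runs in `K` rounds.  `alive k` is the set of candidates with
positive remaining capacity at the start of round `k`, `cap k d` the remaining
capacity of `d`, `dur k > 0` the duration of round `k`, and during round `k`
each voter `i` eats `eat k i`, a worst (for `i`) alive candidate.  Capacities
decrease according to how many voters eat each candidate, a candidate leaves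
`alive` exactly when its capacity hits 0, and each round ends when some
candidate is fully eaten.  If every candidate is eventually eaten and `c`
survives into the last round (i.e. `c` is eaten last), then `c` is unblocked. -/
theorem veto_by_consumption_in_core (m n K : ℕ) (hm : 0 < m) (hn : 0 < n)
    (pref : Fin n → Fin m → Fin m → Prop)
    (hlin : ∀ i, IsStrictTotalOrder (Fin m) (pref i))
    (alive : Fin (K + 1) → Finset (Fin m))
    (cap : Fin (K + 1) → Fin m → ℚ)
    (dur : Fin K → ℚ)
    (eat : Fin K → Fin n → Fin m)
    (halive0 : alive 0 = Finset.univ)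
    (hcap0 : ∀ d, cap 0 d = 1)
    (hdur : ∀ k, 0 < dur k)
    (heat : ∀ k i, eat k i ∈ alive k.castSucc ∧
      ∀ d ∈ alive k.castSucc, d = eat k i ∨ pref i d (eat k i))
    (hcap : ∀ k d, cap k.succ d =
      cap k.castSucc d - dur k * ((Finset.univ.filter (fun i => eat k i = d)).card : ℚ))
    (hnonneg : ∀ k d, 0 ≤ cap k d)
    (halive : ∀ k : Fin K, alive k.succ = (alive k.castSucc).filter (fun d => cap k.succ d ≠ 0))
    (hroundend : ∀ k : Fin K, ∃ d ∈ alive k.castSucc, cap k.succ d = 0)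
    (hend : alive (Fin.last K) = ∅)
    (c : Fin m) (hc : ∀ k : Fin K, c ∈ alive k.castSucc) :
    ∀ T : Finset (Fin n), ¬ Blocks m n pref T c :=
  veto_by_consumption_in_core_general m n K pref hlin alive cap dur eat halive0 hcap0 hdur heat hcap
    halive hend c hc
end
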